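/- Let N = 4m with m ≥ 1 an integer and let p be the completely randomized design with equal group sizes. For each w ∈ 𝒲 let G*(w) be the set of all substitutes of w, i.e., G*(w) = {w̃ : Σ_i w̃_i = N/2, |T(w̃) ∩ T(w)| = N/4}. Then for every assignment W ∈ 𝒲 and every choice of the potential outcomes, the contrast variance estimator computed with G = G* equals Neyman's variance estimator: V̂_sub(W) = V̂_Neyman(W). -/

import Mathlib

/-!
Under the design, `W` is a substitute of `w` exactly when `T(w)` consists of `m` treated and `m`
control units of `W`, and then `p_w / p_W = 1` and `|G*(w)| = C(2m, m)²`. Writing `T(w) = A ∪ B`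
with `A ⊆ T(W)`, `B ⊆ T(W)ᶜ` of size `m`, the contrast `Σ l_i(w) y_i` is `2 (a_A + b_B)`, where
`a_A`, `b_B` are the sums of the outcomes centred at their group means over `A` and `B`. Summing
the squares over all pairs `(A, B)`, the cross terms vanish because `Σ_A a_A = 0`, and
`Σ_A a_A² = C(2m-2, m-1) · Σ_{T(W)} z_i²` with `z_i = y_i - ȳ_t`: as the `z_i` sum to zero,
`a_A² = -Σ_{i ∈ A, j ∉ A} z_i z_j`, and each pair `i ≠ j` is split in this way by `C(2m-2, m-1)`
of the sets `A`. The identity `m · C(2m, m) = 2 (2m-1) · C(2m-2, m-1)`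
turns the resulting constant into Neyman's `1 / ((N/2)(N/2 - 1))`.
-/

open Finset
open scoped Classical

noncomputable section

/-- Observed outcome of unit `i` under assignment `w`. -/
def yObs (N : ℕ) (Y1 Y0 : Fin N → ℝ) (w : Fin N → Bool) (i : Fin N) : ℝ :=
  if w i then Y1 i else Y0 i

/-- `l_i(w) = 1` if treated, `−1` if control. -/
def ell (N : ℕ) (w : Fin N → Bool) (i : Fin N) : ℝ :=
  if w i then 1 else -1

/-- The treated set `T(w)`. -/
def Tset (N : ℕ) (w : Fin N → Bool) : Finset (Fin N) :=
  univ.filter fun i => w i = true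

/-- Completely randomized design with equal group sizes. -/
def crd (N : ℕ) (w : Fin N → Bool) : ℝ :=
  if (Tset N w).card = N / 2 then (1 : ℝ) / (N.choose (N / 2)) else 0

/-- The contrast variance estimator
`V̂_sub(W) = (4/N²)·Σ_{w ∈ 𝒲 : W ∈ G(w)} (p_w/p_W)·(1/|G(w)|)·(Σ_i l_i(w)·y_i(W))²`. -/
def Vsub (N : ℕ) (p : (Fin N → Bool) → ℝ) (Y1 Y0 : Fin N → ℝ)
    (G : (Fin N → Bool) → Finset (Fin N → Bool)) (W : Fin N → Bool) : ℝ :=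
  (4 / (N : ℝ) ^ 2) * ∑ w : Fin N → Bool,
    if 0 < p w ∧ W ∈ G w then
      (p w / p W) * (1 / ((G w).card : ℝ)) * (∑ i, ell N w i * yObs N Y1 Y0 W i) ^ 2
    else 0

/-- The full set of substitutes of `w` under the CRD:
`G*(w) = {w̃ : Σ_i w̃_i = N/2, |T(w̃) ∩ T(w)| = N/4}`. -/
def Gstar (N : ℕ) (w : Fin N → Bool) : Finset (Fin N → Bool) :=
  univ.filter fun w' =>
    (Tset N w').card = N / 2 ∧ (Tset N w' ∩ Tset N w).card = N / 4

/-- Average observed outcome among treated units. -/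
def ybarT (N : ℕ) (Y1 Y0 : Fin N → ℝ) (W : Fin N → Bool) : ℝ :=
  (∑ i ∈ Tset N W, yObs N Y1 Y0 W i) / ((Tset N W).card : ℝ)

/-- Average observed outcome among control units. -/
def ybarC (N : ℕ) (Y1 Y0 : Fin N → ℝ) (W : Fin N → Bool) : ℝ :=
  (∑ i ∈ (Tset N W)ᶜ, yObs N Y1 Y0 W i) / (((Tset N W)ᶜ.card : ℝ))

/-- Neyman's variance estimator. -/
def VNeyman (N : ℕ) (Y1 Y0 : Fin N → ℝ) (W : Fin N → Bool) : ℝ :=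
  (1 / (((N : ℝ) / 2) * ((N : ℝ) / 2 - 1))) *
    ((∑ i ∈ Tset N W, (yObs N Y1 Y0 W i - ybarT N Y1 Y0 W) ^ 2)
      + ∑ i ∈ (Tset N W)ᶜ, (yObs N Y1 Y0 W i - ybarC N Y1 Y0 W) ^ 2)

namespace Finset

section Average

variable {α K : Type*} [Field K] [CharZero K]

theorem sum_sub_sum_div_card (s : Finset α) (y : α → K) :
    ∑ i ∈ s, (y i - (∑ j ∈ s, y j) / #s) = 0 := by
  rw [sum_sub_distrib, sum_const, nsmul_eq_mul, ← expect_eq_sum_div_card, card_mul_expect,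
    sub_self]

theorem two_mul_sum_sub_sum_eq {s A : Finset α} (hs : #s = 2 * #A) (y : α → K) :
    2 * ∑ i ∈ A, y i - ∑ i ∈ s, y i = 2 * ∑ i ∈ A, (y i - (∑ j ∈ s, y j) / #s) := by
  rw [sum_sub_distrib, sum_const, nsmul_eq_mul, ← expect_eq_sum_div_card, ← card_mul_expect s y,
    hs]
  push_cast
  ring

end Average

variable {α : Type*} [DecidableEq α]

theorem card_filter_powersetCard_mem (s : Finset α) {i : α} (hi : i ∈ s) (k : ℕ) :
    #{A ∈ s.powersetCard (k + 1) | i ∈ A} = (#s - 1).choose k := by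
  simpa using card_filter_powersetCard_subset {i} s (k + 1) (by simpa) (by simp)

theorem card_filter_powersetCard_mem_notMem (s : Finset α) {i j : α} (hi : i ∈ s) (hj : j ∈ s)
    (hij : i ≠ j) (k : ℕ) :
    #{A ∈ s.powersetCard (k + 1) | i ∈ A ∧ j ∉ A} = (#s - 2).choose k := by
  have : {A ∈ s.powersetCard (k + 1) | i ∈ A ∧ j ∉ A}
      = {A ∈ (s.erase j).powersetCard (k + 1) | i ∈ A} := by
    ext A
    simp only [mem_filter, mem_powersetCard, subset_erase]
    tauto
  rw [this, card_filter_powersetCard_mem _ (mem_erase.2 ⟨hij, hi⟩), card_erase_of_mem hj,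
    Nat.sub_sub]

theorem sum_powersetCard_sum {M : Type*} [AddCommMonoid M] (s : Finset α) (k : ℕ) (f : α → M) :
    ∑ A ∈ s.powersetCard (k + 1), ∑ i ∈ A, f i = (#s - 1).choose k • ∑ i ∈ s, f i := by
  rw [sum_comm' (t' := s) (s' := fun i => {A ∈ s.powersetCard (k + 1) | i ∈ A})
    (fun A i => by simp only [mem_filter, mem_powersetCard]; grind), smul_sum]
  exact sum_congr rfl fun i hi => by rw [sum_const, card_filter_powersetCard_mem s hi]

theorem sum_sum_sum_sdiff {M : Type*} [AddCommMonoid M] {s : Finset α} {P : Finset (Finset α)}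
    (hP : ∀ A ∈ P, A ⊆ s) (g : α → α → M) :
    ∑ A ∈ P, ∑ i ∈ A, ∑ j ∈ s \ A, g i j = ∑ i ∈ s, ∑ j ∈ s, #{A ∈ P | i ∈ A ∧ j ∉ A} • g i j := by
  rw [sum_comm' (t' := s) (s' := fun i => {A ∈ P | i ∈ A})
    (fun A i => by simp only [mem_filter]; grind)]
  refine sum_congr rfl fun i _ => ?_
  rw [sum_comm' (t' := s) (s' := fun j => {A ∈ P | i ∈ A ∧ j ∉ A})
    (fun A j => by simp only [mem_filter, mem_sdiff]; grind)]
  simp only [sum_const]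

theorem sum_powersetCard_sq_of_sum_eq_zero {R : Type*} [CommRing R] (s : Finset α) (k : ℕ)
    {z : α → R} (hz : ∑ i ∈ s, z i = 0) :
    ∑ A ∈ s.powersetCard (k + 1), (∑ i ∈ A, z i) ^ 2 = (#s - 2).choose k * ∑ i ∈ s, z i ^ 2 := by
  have split (A) (hA : A ∈ s.powersetCard (k + 1)) :
      (∑ i ∈ A, z i) ^ 2 = -∑ i ∈ A, ∑ j ∈ s \ A, z i * z j := by
    have := sum_sdiff (f := z) (mem_powersetCard.1 hA).1
    rw [hz, ← eq_neg_iff_add_eq_zero] at this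
    rw [← sum_mul_sum, this]
    ring
  have row (i) (hi : i ∈ s) :
      ∑ j ∈ s, #{A ∈ s.powersetCard (k + 1) | i ∈ A ∧ j ∉ A} • (z i * z j)
        = -((#s - 2).choose k * z i ^ 2) := by
    have count (j) (hj : j ∈ s.erase i) :
        #{A ∈ s.powersetCard (k + 1) | i ∈ A ∧ j ∉ A} = (#s - 2).choose k :=
      card_filter_powersetCard_mem_notMem s hi (mem_of_mem_erase hj) (ne_of_mem_erase hj).symm k
    rw [← add_sum_erase _ _ hi, sum_congr rfl fun j hj => by rw [count j hj]]
    simp only [and_not_self, filter_false, card_empty, zero_smul, zero_add, nsmul_eq_mul,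
      ← mul_sum, sum_erase_eq_sub hi, hz]
    ring
  rw [sum_congr rfl split, sum_neg_distrib,
    sum_sum_sum_sdiff (fun A hA => (mem_powersetCard.1 hA).1), sum_congr rfl row,
    sum_neg_distrib, neg_neg, mul_sum]

theorem sum_filter_card_inter [Fintype α] {M : Type*} [AddCommMonoid M] (t : Finset α) (a b : ℕ)
    (F : Finset α → M) :
    ∑ S with #S = a + b ∧ #(S ∩ t) = a, F S
      = ∑ A ∈ t.powersetCard a, ∑ B ∈ tᶜ.powersetCard b, F (A ∪ B) := by
  rw [← sum_product']
  refine sum_nbij' (fun S => (S ∩ t, S \ t)) (fun p => p.1 ∪ p.2) ?_ ?_ ?_ ?_ ?_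
  · intro S hS
    have := card_inter_add_card_sdiff S t
    simp only [mem_filter, mem_univ, true_and, mem_product, mem_powersetCard] at hS ⊢
    refine ⟨⟨inter_subset_right, hS.2⟩, fun i => by simp, by omega⟩
  · rintro ⟨A, B⟩ hAB
    simp only [mem_filter, mem_univ, true_and, mem_product, mem_powersetCard] at hAB ⊢
    obtain ⟨⟨hA, rfl⟩, hB, rfl⟩ := hAB
    have hBt : Disjoint B t := disjoint_of_subset_left hB disjoint_compl_left
    rw [card_union_of_disjoint (disjoint_of_subset_left hA hBt.symm), union_inter_distrib_right,
      inter_eq_left.2 hA, disjoint_iff_inter_eq_empty.1 hBt, union_empty]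
    exact ⟨rfl, rfl⟩
  · intro S _
    exact sup_inf_sdiff S t
  · rintro ⟨A, B⟩ hAB
    simp only [mem_product, mem_powersetCard] at hAB
    obtain ⟨⟨hA, -⟩, hB, -⟩ := hAB
    have hBt : Disjoint B t := disjoint_of_subset_left hB disjoint_compl_left
    exact Prod.ext
      (by simp [union_inter_distrib_right, inter_eq_left.2 hA, disjoint_iff_inter_eq_empty.1 hBt])
      (by simp [union_sdiff_distrib, sdiff_eq_empty_iff_subset.2 hA, sdiff_eq_self_of_disjoint hBt])
  · intro S _
    exact congrArg F (sup_inf_sdiff S t).symm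

theorem card_filter_card_inter [Fintype α] (t : Finset α) (a b : ℕ) :
    #{S | #S = a + b ∧ #(S ∩ t) = a} = (#t).choose a * (#tᶜ).choose b := by
  rw [card_eq_sum_ones, sum_filter_card_inter]
  simp

theorem sum_sum_add_sq {ι κ R : Type*} [CommSemiring R] (s : Finset ι) (t : Finset κ)
    (f : ι → R) (g : κ → R) :
    ∑ i ∈ s, ∑ j ∈ t, (f i + g j) ^ 2
      = #t * ∑ i ∈ s, f i ^ 2 + #s * ∑ j ∈ t, g j ^ 2 + 2 * (∑ i ∈ s, f i) * ∑ j ∈ t, g j := by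
  simp only [add_sq, sum_add_distrib, sum_const, nsmul_eq_mul, mul_sum, sum_mul]
  rw [sum_comm (s := t)]
  ring

theorem sum_sq_two_mul_sum_union_sub_sum {K : Type*} [Field K] [CharZero K] [Fintype α]
    {t : Finset α} {a b : ℕ} (ht : #t = 2 * (a + 1)) (htc : #tᶜ = 2 * (b + 1)) (y : α → K) :
    ∑ A ∈ t.powersetCard (a + 1), ∑ B ∈ tᶜ.powersetCard (b + 1),
        (2 * ∑ i ∈ A ∪ B, y i - ∑ i, y i) ^ 2
      = 4 * ((b + 1).centralBinom * a.centralBinom * ∑ i ∈ t, (y i - (∑ j ∈ t, y j) / #t) ^ 2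
          + (a + 1).centralBinom * b.centralBinom *
              ∑ i ∈ tᶜ, (y i - (∑ j ∈ tᶜ, y j) / #tᶜ) ^ 2) := by
  have center (A) (hA : A ∈ t.powersetCard (a + 1)) (B) (hB : B ∈ tᶜ.powersetCard (b + 1)) :
      2 * ∑ i ∈ A ∪ B, y i - ∑ i, y i
        = 2 * (∑ i ∈ A, (y i - (∑ j ∈ t, y j) / #t) + ∑ i ∈ B, (y i - (∑ j ∈ tᶜ, y j) / #tᶜ)) := by
    rw [mem_powersetCard] at hA hB
    have hAB : Disjoint A B :=
      disjoint_of_subset_left hA.1 (disjoint_of_subset_right hB.1 disjoint_compl_right)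
    rw [sum_union hAB, ← sum_add_sum_compl t y]
    linear_combination two_mul_sum_sub_sum_eq (by omega : #t = 2 * #A) y
      + two_mul_sum_sub_sum_eq (by omega : #tᶜ = 2 * #B) y
  rw [sum_congr rfl fun A hA => sum_congr rfl fun B hB => by rw [center A hA B hB]]
  simp_rw [mul_pow, ← mul_sum]
  rw [sum_sum_add_sq, sum_powersetCard_sq_of_sum_eq_zero _ _ (sum_sub_sum_div_card t y),
    sum_powersetCard_sq_of_sum_eq_zero _ _ (sum_sub_sum_div_card tᶜ y), sum_powersetCard_sum,
    sum_powersetCard_sum, sum_sub_sum_div_card, sum_sub_sum_div_card, smul_zero, mul_zero,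
    zero_mul, add_zero, card_powersetCard, card_powersetCard, ht, htc,
    show 2 * (a + 1) - 2 = 2 * a by omega, show 2 * (b + 1) - 2 = 2 * b by omega]
  simp only [← Nat.centralBinom_eq_two_mul_choose]
  ring

end Finset

theorem Tset_bijective (N : ℕ) : Function.Bijective (Tset N) := by
  refine Function.bijective_iff_has_inverse.2 ⟨fun S i => decide (i ∈ S), fun w => ?_, fun S => ?_⟩
  · funext i
    by_cases h : w i = true <;> simp [Tset, h]
  · ext i
    simp [Tset]

theorem sum_Tset {M : Type*} [AddCommMonoid M] (N : ℕ) (F : Finset (Fin N) → M) :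
    ∑ w, F (Tset N w) = ∑ S, F S :=
  Fintype.sum_bijective _ (Tset_bijective N) _ _ fun _ => rfl

theorem sum_ell_mul (N : ℕ) (w : Fin N → Bool) (y : Fin N → ℝ) :
    ∑ i, ell N w i * y i = 2 * ∑ i ∈ Tset N w, y i - ∑ i, y i := by
  rw [Tset, sum_filter, mul_sum, ← sum_sub_distrib]
  refine sum_congr rfl fun i _ => ?_
  by_cases h : w i <;> simp [ell, h]; ring

theorem crd_pos_iff {N : ℕ} {w : Fin N → Bool} : 0 < crd N w ↔ #(Tset N w) = N / 2 := by
  unfold crd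
  split_ifs with h
  · simpa [h] using Nat.choose_pos (Nat.div_le_self N 2)
  · simp [h]

theorem card_compl_Tset {N : ℕ} (hN : 2 ∣ N) {w : Fin N → Bool} (hw : #(Tset N w) = N / 2) :
    #(Tset N w)ᶜ = N / 2 := by
  rw [card_compl, Fintype.card_fin, hw]
  omega

theorem mem_Gstar {N : ℕ} {w w' : Fin N → Bool} :
    w' ∈ Gstar N w ↔ #(Tset N w') = N / 2 ∧ #(Tset N w' ∩ Tset N w) = N / 4 := by
  simp [Gstar]

theorem card_Gstar {N : ℕ} (hN : 4 ∣ N) {w : Fin N → Bool} (hw : #(Tset N w) = N / 2) :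
    #(Gstar N w) = (N / 2).choose (N / 4) ^ 2 := by
  have hN2 : N / 2 = N / 4 + N / 4 := by omega
  rw [Gstar, card_filter, hN2,
    sum_Tset N fun S => if #S = N / 4 + N / 4 ∧ #(S ∩ Tset N w) = N / 4 then 1 else 0,
    ← card_filter, card_filter_card_inter, card_compl_Tset (by omega) hw, hw, hN2, sq]

theorem Vsub_crd_Gstar {N : ℕ} (hN : 4 ∣ N) (Y1 Y0 : Fin N → ℝ) {W : Fin N → Bool}
    (hW : #(Tset N W) = N / 2) :
    Vsub N (crd N) Y1 Y0 (Gstar N) W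
      = 4 / N ^ 2 / (N / 2).choose (N / 4) ^ 2 *
        ∑ A ∈ (Tset N W).powersetCard (N / 4), ∑ B ∈ (Tset N W)ᶜ.powersetCard (N / 4),
          (2 * ∑ i ∈ A ∪ B, yObs N Y1 Y0 W i - ∑ i, yObs N Y1 Y0 W i) ^ 2 := by
  set y := yObs N Y1 Y0 W
  have hN2 : N / 2 = N / 4 + N / 4 := by omega
  let F (S : Finset (Fin N)) : ℝ :=
    if #S = N / 4 + N / 4 ∧ #(S ∩ Tset N W) = N / 4 then (2 * ∑ i ∈ S, y i - ∑ i, y i) ^ 2 else 0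
  have summand (w : Fin N → Bool) :
      (if 0 < crd N w ∧ W ∈ Gstar N w then
        crd N w / crd N W * (1 / (#(Gstar N w) : ℝ)) * (∑ i, ell N w i * y i) ^ 2 else 0)
        = F (Tset N w) / (N / 2).choose (N / 4) ^ 2 := by
    simp only [F, crd_pos_iff, mem_Gstar, hW, true_and, inter_comm (Tset N W), ← hN2]
    split_ifs with h
    · rw [card_Gstar hN h.1, crd, crd, if_pos h.1, if_pos hW, sum_ell_mul,
      div_self (by simp [(Nat.choose_pos (Nat.div_le_self N 2)).ne'])]
      push_cast
      ring
    · simp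
  rw [Vsub, sum_congr rfl fun w _ => summand w, ← sum_div, sum_Tset N F, ← sum_filter,
    sum_filter_card_inter]
  ring

/-- Theorem 2: under the CRD with `N = 4m`, the contrast variance estimator with the
full set of substitutes equals Neyman's variance estimator. -/
theorem contrast_equals_neyman
    (N m : ℕ) (hm : 1 ≤ m) (hN : N = 4 * m)
    (Y1 Y0 : Fin N → ℝ)
    (W : Fin N → Bool) (hW : (Tset N W).card = N / 2) :
    Vsub N (crd N) Y1 Y0 (Gstar N) W = VNeyman N Y1 Y0 W := by
  obtain ⟨j, rfl⟩ : ∃ j, m = j + 1 := ⟨m - 1, by omega⟩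
  have ht : #(Tset N W) = 2 * (j + 1) := by omega
  have htc : #(Tset N W)ᶜ = 2 * (j + 1) := by rw [card_compl_Tset (by omega) hW]; omega
  rw [Vsub_crd_Gstar ⟨j + 1, hN⟩ Y1 Y0 hW, show N / 4 = j + 1 by omega,
    sum_sq_two_mul_sum_union_sub_sum ht htc, VNeyman, ybarT, ybarC,
    show N / 2 = 2 * (j + 1) by omega, ← Nat.centralBinom_eq_two_mul_choose]
  have key : ((j + 1 : ℕ) : ℝ) * (j + 1).centralBinom = 2 * (2 * j + 1) * j.centralBinom := by
    exact_mod_cast Nat.succ_mul_centralBinom_succ j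
  have hc : ((j + 1).centralBinom : ℝ) ≠ 0 := by exact_mod_cast (Nat.centralBinom_pos _).ne'
  have hNR : (N : ℝ) = 4 * (j + 1) := by exact_mod_cast hN
  rw [hNR]
  push_cast at key
  field_simp
  rw [key, eq_div_iff (by linarith)]
  ring
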